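/- arXiv:1504.00800 — 2 statements merged into one kernel-verified Lean document; each statement's English description precedes it below -/
import Mathlib

section
/- Let n ≥ 1 and let A be an n×n nonnegative real matrix whose max-times spectral radius λ(A) is positive. Then the infimum over all positive vectors x ∈ ℝ_{>0}^n of max_{i,j} A_{ij} x_j / x_i equals λ(A), and the infimum is attained. -/
open scoped BigOperators

noncomputable section

/-- The max-times spectral radius (maximum geometric cycle mean) of a
nonnegative `n × n` real matrix. -/
def mtSpecRad {n : ℕ} (A : Matrix (Fin n) (Fin n) ℝ) : ℝ :=
  sSup { r : ℝ | ∃ (k : ℕ) (hk : 0 < k), k ≤ n ∧ ∃ f : Fin k → Fin n,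
    r = (∏ t : Fin k, A (f t) (f ⟨((t : ℕ) + 1) % k, Nat.mod_lt _ hk⟩)) ^ ((k : ℝ)⁻¹) }

/-- The maximum cycle mean of a real `n × n` matrix (max-plus spectral radius). -/
def mpCycleMean {n : ℕ} (A : Matrix (Fin n) (Fin n) ℝ) : ℝ :=
  sSup { r : ℝ | ∃ (k : ℕ) (hk : 0 < k), k ≤ n ∧ ∃ f : Fin k → Fin n,
    r = (∑ t : Fin k, A (f t) (f ⟨((t : ℕ) + 1) % k, Nat.mod_lt _ hk⟩)) / (k : ℝ) }

/-- Max-times matrix product. -/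
def mtMul {n : ℕ} (A B : Matrix (Fin n) (Fin n) ℝ) : Matrix (Fin n) (Fin n) ℝ :=
  Matrix.of fun i j => ⨆ k : Fin n, A i k * B k j

/-- Max-times matrix powers, with `A^{⊗0} = I`. -/
def mtPow {n : ℕ} (A : Matrix (Fin n) (Fin n) ℝ) : ℕ → Matrix (Fin n) (Fin n) ℝ
  | 0 => Matrix.of fun i j => if i = j then 1 else 0
  | (k + 1) => mtMul (mtPow A k) A

/-- Max-times Kleene star: entrywise maximum of `I, S, S^{⊗2}, …, S^{⊗(n-1)}`. -/
def mtStar {n : ℕ} (S : Matrix (Fin n) (Fin n) ℝ) : Matrix (Fin n) (Fin n) ℝ :=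
  Matrix.of fun i j => ⨆ k : Fin n, mtPow S (k : ℕ) i j

/-- Max-times matrix-vector product. -/
def mtVecMul {n : ℕ} (S : Matrix (Fin n) (Fin n) ℝ) (u : Fin n → ℝ) : Fin n → ℝ :=
  fun i => ⨆ j, S i j * u j

/-- Max-plus matrix product. -/
def mpMul {n : ℕ} (A B : Matrix (Fin n) (Fin n) ℝ) : Matrix (Fin n) (Fin n) ℝ :=
  Matrix.of fun i j => ⨆ k : Fin n, (A i k + B k j)

/-- `mpPow A k` is the max-plus power `A^{⊗(k+1)}`. -/
def mpPow {n : ℕ} (A : Matrix (Fin n) (Fin n) ℝ) : ℕ → Matrix (Fin n) (Fin n) ℝ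
  | 0 => A
  | (k + 1) => mpMul (mpPow A k) A

/-- Max-plus Kleene star: `S^*_{ii} = max(0, max_{1≤k≤n-1} (S^{⊗k})_{ii})` and
`S^*_{ij} = max_{1≤k≤n-1} (S^{⊗k})_{ij}` for `i ≠ j`. -/
def mpStar {n : ℕ} (S : Matrix (Fin n) (Fin n) ℝ) : Matrix (Fin n) (Fin n) ℝ :=
  Matrix.of fun i j =>
    if i = j then max 0 (⨆ k : Fin (n - 1), mpPow S (k : ℕ) i j)
    else ⨆ k : Fin (n - 1), mpPow S (k : ℕ) i j

/-- Max-plus matrix-vector product. -/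
def mpVecMul {n : ℕ} (S : Matrix (Fin n) (Fin n) ℝ) (x : Fin n → ℝ) : Fin n → ℝ :=
  fun i => ⨆ j, (S i j + x j)

/-- Chebyshev-like (max-times) distance between a nonnegative matrix `A` and the
rank-one reciprocal matrix with entries `x i / x j`. -/
def mtRho {n : ℕ} (A : Matrix (Fin n) (Fin n) ℝ) (x : Fin n → ℝ) : ℝ :=
  max (⨆ p : Fin n × Fin n, A p.1 p.2 * x p.2 / x p.1)
    (sSup { r : ℝ | ∃ i j, 0 < A i j ∧ r = x i / (A i j * x j) })

/-- The alternating max-times product `A ⊗ C^{⊗ i₁} ⊗ A ⊗ C^{⊗ i₂} ⊗ ⋯ ⊗ A ⊗ C^{⊗ i_k}`. -/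
def mtChain {n : ℕ} (A C : Matrix (Fin n) (Fin n) ℝ) :
    (k : ℕ) → (Fin k → ℕ) → Matrix (Fin n) (Fin n) ℝ
  | 0, _ => Matrix.of fun i j => if i = j then 1 else 0
  | (k + 1), f => mtMul (mtMul A (mtPow C (f 0))) (mtChain A C k (fun t => f t.succ))

/-- The optimal value `θ` of the constrained max-times approximation problem. -/
def mtTheta {n : ℕ} (A C : Matrix (Fin n) (Fin n) ℝ) : ℝ :=
  max (mtSpecRad A)
    (sSup { r : ℝ | ∃ k : ℕ, 0 < k ∧ k ≤ n - 1 ∧ ∃ f : Fin k → ℕ,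
      1 ≤ ∑ t, f t ∧ (∑ t, f t) ≤ n - k ∧
      r = (⨆ i, mtChain A C k f i i) ^ ((k : ℝ)⁻¹) })


/-!
For positive `x`, a cycle product of `A` is also the product of the ratios `A i j * x j / x i`
along the cycle, because the factors `x` telescope; hence `λ(A)` is at most the largest ratio.
Conversely, every cycle of `B = λ(A)⁻¹ • A` with at most `n` edges has weight at most `1`. So
cutting cycles out of walks shows that every walk from `i` weighs at most the heaviest walk from
`i` with fewer than `n` edges. If `x i` is that heaviest weight, then `B i j * x j ≤ x i`, so
every ratio is at most `λ(A)`.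
-/

open Finset

namespace List

theorem exists_eq_append_cons_append_cons_of_not_nodup {α : Type*} {l : List α}
    (h : ¬ l.Nodup) : ∃ p a q r, l = p ++ a :: q ++ a :: r := by
  induction l with
  | nil => simp at h
  | cons b l ih =>
    by_cases hb : b ∈ l
    · obtain ⟨q, r, rfl⟩ := List.append_of_mem hb
      exact ⟨[], b, q, r, rfl⟩
    · obtain ⟨p, a, q, r, rfl⟩ := ih fun hnd => h (List.nodup_cons.mpr ⟨hb, hnd⟩)
      exact ⟨b :: p, a, q, r, rfl⟩

theorem exists_eq_append_cons_append_cons_of_card_lt_length {α : Type*} [Fintype α]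
    {l : List α} (h : Fintype.card α < l.length) :
    ∃ p a q r, l = p ++ a :: q ++ a :: r ∧ q.length < Fintype.card α := by
  have hnd : ¬ (l.take (Fintype.card α + 1)).Nodup := fun hnd => by
    have := hnd.length_le_card
    simp only [length_take] at this
    omega
  obtain ⟨p, a, q, r, hpr⟩ := exists_eq_append_cons_append_cons_of_not_nodup hnd
  refine ⟨p, a, q, r ++ l.drop (Fintype.card α + 1), ?_, ?_⟩
  · calc l = l.take (Fintype.card α + 1) ++ l.drop (Fintype.card α + 1) :=
          (take_append_drop _ _).symm
      _ = _ := by rw [hpr]; simp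
  · have := congrArg length hpr
    simp only [length_take, length_append, length_cons] at this
    omega

end List

theorem Fin.mk_add_one_mod_eq_finRotate {k : ℕ} (hk : 0 < k) (t : Fin k) :
    (⟨((t : ℕ) + 1) % k, Nat.mod_lt _ hk⟩ : Fin k) = finRotate k t := by
  have : NeZero k := ⟨hk.ne'⟩
  ext
  simp [finRotate_apply, Fin.val_add, Nat.add_mod]

namespace Matrix

variable {ι R : Type*}

/-- A walk is encoded by the list of its vertices. -/
def walkWeight [One R] [Mul R] (A : Matrix ι ι R) : List ι → R
  | a :: b :: w => A a b * walkWeight A (b :: w)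
  | _ => 1

section CommMonoid

variable [CommMonoid R] (A : Matrix ι ι R)

@[simp]
theorem walkWeight_nil : A.walkWeight [] = 1 := rfl

@[simp]
theorem walkWeight_singleton (a : ι) : A.walkWeight [a] = 1 := rfl

@[simp]
theorem walkWeight_cons_cons (a b : ι) (w : List ι) :
    A.walkWeight (a :: b :: w) = A a b * A.walkWeight (b :: w) := rfl

theorem walkWeight_append_cons (u v : List ι) (a : ι) :
    A.walkWeight (u ++ a :: v) = A.walkWeight (u ++ [a]) * A.walkWeight (a :: v) := by
  induction u with
  | nil => simp
  | cons b u ih =>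
    cases u with
    | nil => simp
    | cons c u => simp only [List.cons_append, walkWeight_cons_cons] at ih ⊢; rw [ih, mul_assoc]

theorem walkWeight_smul (c : R) (a : ι) (w : List ι) :
    (c • A).walkWeight (a :: w) = c ^ w.length * A.walkWeight (a :: w) := by
  induction w generalizing a with
  | nil => simp
  | cons b w ih =>
    rw [walkWeight_cons_cons, walkWeight_cons_cons, ih, smul_apply, smul_eq_mul,
      mul_mul_mul_comm, ← pow_succ', List.length_cons]

theorem walkWeight_cons_ofFn (a : ι) {m : ℕ} (g : Fin (m + 1) → ι) :
    A.walkWeight (a :: List.ofFn g) = A a (g 0) * A.walkWeight (List.ofFn g) := by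
  rw [List.ofFn_succ, walkWeight_cons_cons]

theorem walkWeight_ofFn {m : ℕ} (g : Fin (m + 1) → ι) :
    A.walkWeight (List.ofFn g) = ∏ t : Fin m, A (g t.castSucc) (g t.succ) := by
  induction m with
  | zero => simp
  | succ m ih =>
    rw [List.ofFn_succ, walkWeight_cons_ofFn, ih, Fin.prod_univ_succ]
    rfl

def cycleProd {k : ℕ} (f : Fin k → ι) : R :=
  ∏ t, A (f t) (f (finRotate k t))

theorem cycleProd_eq_prod_mod {k : ℕ} (hk : 0 < k) (f : Fin k → ι) :
    A.cycleProd f = ∏ t : Fin k, A (f t) (f ⟨((t : ℕ) + 1) % k, Nat.mod_lt _ hk⟩) := by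
  simp only [cycleProd, ← Fin.mk_add_one_mod_eq_finRotate hk]

theorem cycleProd_eq_walkWeight {m : ℕ} (f : Fin (m + 1) → ι) :
    A.cycleProd f = A.walkWeight (List.ofFn f ++ [f 0]) := by
  have hsnoc : List.ofFn f ++ [f 0] = List.ofFn (Fin.snoc f (f 0) : Fin (m + 2) → ι) := by
    simp only [List.ofFn_succ' (Fin.snoc f (f 0)), Fin.snoc_castSucc, Fin.snoc_last,
      List.concat_eq_append]
  rw [hsnoc, walkWeight_ofFn, cycleProd]
  refine Fintype.prod_congr _ _ fun t => ?_
  induction t using Fin.lastCases with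
  | last => simp only [Fin.snoc_castSucc, Fin.succ_last, Fin.snoc_last, finRotate_last]
  | cast s =>
    rw [Fin.snoc_castSucc, Fin.succ_castSucc, Fin.snoc_castSucc, finRotate_apply,
      Fin.coeSucc_eq_succ]

end CommMonoid

section OrderedSemiring

variable [CommSemiring R] [PartialOrder R] [IsOrderedRing R] {A : Matrix ι ι R}

theorem walkWeight_nonneg (hA : ∀ i j, 0 ≤ A i j) (w : List ι) : 0 ≤ A.walkWeight w := by
  induction w with
  | nil => simp
  | cons a w ih =>
    cases w with
    | nil => simp
    | cons b w => simpa using mul_nonneg (hA a b) ih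

theorem walkWeight_cut_cycle_le (hA : ∀ i j, 0 ≤ A i j) {p q r : List ι} {a : ι}
    (hcyc : A.walkWeight (a :: q ++ [a]) ≤ 1) :
    A.walkWeight (p ++ a :: q ++ a :: r) ≤ A.walkWeight (p ++ a :: r) := by
  rw [List.append_assoc, List.cons_append, A.walkWeight_append_cons p,
    A.walkWeight_append_cons p r, show a :: (q ++ a :: r) = (a :: q) ++ a :: r from rfl,
    A.walkWeight_append_cons (a :: q)]
  exact mul_le_mul_of_nonneg_left
    (mul_le_of_le_one_left (walkWeight_nonneg hA _) hcyc) (walkWeight_nonneg hA _)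

theorem exists_walkWeight_le_of_length_le_card [Fintype ι] (hA : ∀ i j, 0 ≤ A i j)
    (hcyc : ∀ a q, q.length < Fintype.card ι → A.walkWeight (a :: q ++ [a]) ≤ 1)
    (w : List ι) :
    ∃ w', w'.length ≤ Fintype.card ι ∧ w'.head? = w.head? ∧
      A.walkWeight w ≤ A.walkWeight w' := by
  induction hlen : w.length using Nat.strong_induction_on generalizing w with
  | _ m ih =>
    by_cases hshort : w.length ≤ Fintype.card ι
    · exact ⟨w, hshort, rfl, le_rfl⟩
    obtain ⟨p, a, q, r, rfl, hq⟩ :=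
      List.exists_eq_append_cons_append_cons_of_card_lt_length (not_le.mp hshort)
    obtain ⟨w', hw'len, hw'head, hw'⟩ :=
      ih (p ++ a :: r).length (by simp at hlen ⊢; omega) (p ++ a :: r) rfl
    refine ⟨w', hw'len, by rw [hw'head]; simp, ?_⟩
    exact (walkWeight_cut_cycle_le hA (hcyc a q hq)).trans hw'

end OrderedSemiring

section Semifield

variable {R : Type*} [Semifield R] (A : Matrix ι ι R)

theorem cycleProd_eq_prod_mul_div {k : ℕ} (f : Fin k → ι) {x : ι → R} (hx : ∀ i, x i ≠ 0) :
    ∏ t, A (f t) (f (finRotate k t)) * x (f (finRotate k t)) / x (f t) = A.cycleProd f := by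
  rw [prod_div_distrib, prod_mul_distrib, Equiv.prod_comp (finRotate k) (fun t => x (f t)),
    mul_div_assoc, div_self (prod_ne_zero_iff.mpr fun t _ => hx (f t)), mul_one, cycleProd]

end Semifield

theorem cycleProd_le_pow {R : Type*} [Field R] [LinearOrder R] [IsStrictOrderedRing R]
    {A : Matrix ι ι R} (hA : ∀ i j, 0 ≤ A i j) {x : ι → R} (hx : ∀ i, 0 < x i) {M : R}
    (hM : ∀ i j, A i j * x j / x i ≤ M) {k : ℕ} (f : Fin k → ι) :
    A.cycleProd f ≤ M ^ k := by
  rw [← cycleProd_eq_prod_mul_div A f fun i => (hx i).ne']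
  calc ∏ t, A (f t) (f (finRotate k t)) * x (f (finRotate k t)) / x (f t)
      ≤ ∏ _t : Fin k, M :=
        prod_le_prod (fun t _ => div_nonneg (mul_nonneg (hA _ _) (hx _).le) (hx _).le)
          fun t _ => hM _ _
    _ = M ^ k := by simp

section MaxShortWalkWeight

variable [Fintype ι]

/-- `w.length` counts vertices, so these walks have fewer than `card ι` edges. -/
def shortWalks (i : ι) : Set (List ι) :=
  {w | w.length ≤ Fintype.card ι ∧ w.head? = some i}

theorem finite_shortWalks (i : ι) : (shortWalks i).Finite :=
  (List.finite_length_le ι _).subset fun _ hw => hw.1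

theorem singleton_mem_shortWalks (i : ι) : [i] ∈ shortWalks i :=
  ⟨Fintype.card_pos_iff.mpr ⟨i⟩, rfl⟩

def maxShortWalkWeight (A : Matrix ι ι ℝ) (i : ι) : ℝ :=
  sSup (A.walkWeight '' shortWalks i)

variable {A : Matrix ι ι ℝ}

theorem walkWeight_le_maxShortWalkWeight (hA : ∀ i j, 0 ≤ A i j)
    (hcyc : ∀ a q, q.length < Fintype.card ι → A.walkWeight (a :: q ++ [a]) ≤ 1)
    {i : ι} {w : List ι} (hw : w.head? = some i) :
    A.walkWeight w ≤ A.maxShortWalkWeight i := by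
  obtain ⟨w', hw'len, hw'head, hle⟩ := exists_walkWeight_le_of_length_le_card hA hcyc w
  exact hle.trans (le_csSup ((finite_shortWalks i).image _).bddAbove
    (Set.mem_image_of_mem _ ⟨hw'len, hw'head ▸ hw⟩))

theorem one_le_maxShortWalkWeight (A : Matrix ι ι ℝ) (i : ι) : 1 ≤ A.maxShortWalkWeight i :=
  le_csSup ((finite_shortWalks i).image _).bddAbove
    (Set.mem_image_of_mem A.walkWeight (singleton_mem_shortWalks i))

theorem mul_maxShortWalkWeight_le (hA : ∀ i j, 0 ≤ A i j)
    (hcyc : ∀ a q, q.length < Fintype.card ι → A.walkWeight (a :: q ++ [a]) ≤ 1) (i j : ι) :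
    A i j * A.maxShortWalkWeight j ≤ A.maxShortWalkWeight i := by
  obtain ⟨w, ⟨-, hwhead⟩, hw⟩ := Set.Nonempty.csSup_mem
    ⟨_, Set.mem_image_of_mem A.walkWeight (singleton_mem_shortWalks j)⟩
    ((finite_shortWalks j).image _)
  obtain ⟨l, rfl⟩ := List.head?_eq_some_iff.mp hwhead
  rw [maxShortWalkWeight, ← hw, ← walkWeight_cons_cons]
  exact walkWeight_le_maxShortWalkWeight hA hcyc rfl

end MaxShortWalkWeight

end Matrix

open Matrix

section MtSpecRad

variable {n : ℕ} {A : Matrix (Fin n) (Fin n) ℝ}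

theorem mtSpecRad_eq_sSup_cycleProd (A : Matrix (Fin n) (Fin n) ℝ) :
    mtSpecRad A = sSup {r | ∃ k, 0 < k ∧ k ≤ n ∧ ∃ f : Fin k → Fin n,
      r = A.cycleProd f ^ (k : ℝ)⁻¹} := by
  refine congrArg sSup (Set.ext fun r => exists_congr fun k => ?_)
  constructor <;> rintro ⟨hk, hkn, f, rfl⟩ <;>
    exact ⟨hk, hkn, f, by rw [A.cycleProd_eq_prod_mod hk]⟩

theorem iSup_mul_div_nonneg (hA : ∀ i j, 0 ≤ A i j) {x : Fin n → ℝ} (hx : ∀ i, 0 < x i) :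
    0 ≤ ⨆ p : Fin n × Fin n, A p.1 p.2 * x p.2 / x p.1 :=
  Real.iSup_nonneg fun _ => div_nonneg (mul_nonneg (hA _ _) (hx _).le) (hx _).le

theorem cycleProd_rpow_inv_le_iSup (hA : ∀ i j, 0 ≤ A i j) {x : Fin n → ℝ}
    (hx : ∀ i, 0 < x i) {k : ℕ} (hk : 0 < k) (f : Fin k → Fin n) :
    A.cycleProd f ^ (k : ℝ)⁻¹ ≤ ⨆ p : Fin n × Fin n, A p.1 p.2 * x p.2 / x p.1 := by
  set M := ⨆ p : Fin n × Fin n, A p.1 p.2 * x p.2 / x p.1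
  have hM : ∀ i j, A i j * x j / x i ≤ M := fun i j =>
    le_ciSup (f := fun p : Fin n × Fin n => A p.1 p.2 * x p.2 / x p.1)
      (Set.finite_range _).bddAbove (i, j)
  calc A.cycleProd f ^ (k : ℝ)⁻¹ ≤ (M ^ k) ^ (k : ℝ)⁻¹ :=
        Real.rpow_le_rpow (prod_nonneg fun _ _ => hA _ _) (cycleProd_le_pow hA hx hM f)
          (by positivity)
    _ = M := Real.pow_rpow_inv_natCast (iSup_mul_div_nonneg hA hx) hk.ne'

theorem mtSpecRad_le_iSup (hA : ∀ i j, 0 ≤ A i j) {x : Fin n → ℝ} (hx : ∀ i, 0 < x i) :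
    mtSpecRad A ≤ ⨆ p : Fin n × Fin n, A p.1 p.2 * x p.2 / x p.1 := by
  rw [mtSpecRad_eq_sSup_cycleProd]
  refine Real.sSup_le ?_ (iSup_mul_div_nonneg hA hx)
  rintro _ ⟨k, hk, -, f, rfl⟩
  exact cycleProd_rpow_inv_le_iSup hA hx hk f

theorem cycleProd_le_mtSpecRad_pow (hA : ∀ i j, 0 ≤ A i j) {k : ℕ} (hk : 0 < k) (hkn : k ≤ n)
    (f : Fin k → Fin n) : A.cycleProd f ≤ mtSpecRad A ^ k := by
  have hP : 0 ≤ A.cycleProd f := prod_nonneg fun _ _ => hA _ _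
  have hbdd : BddAbove {r | ∃ k, 0 < k ∧ k ≤ n ∧ ∃ f : Fin k → Fin n,
      r = A.cycleProd f ^ (k : ℝ)⁻¹} :=
    ⟨_, fun _ ⟨k, hk, _, f, hr⟩ =>
      hr ▸ cycleProd_rpow_inv_le_iSup hA (x := 1) (fun _ => one_pos) hk f⟩
  have hmean : A.cycleProd f ^ (k : ℝ)⁻¹ ≤ mtSpecRad A := by
    rw [mtSpecRad_eq_sSup_cycleProd]
    exact le_csSup hbdd ⟨k, hk, hkn, f, rfl⟩
  calc A.cycleProd f = (A.cycleProd f ^ (k : ℝ)⁻¹) ^ k :=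
        (Real.rpow_inv_natCast_pow hP hk.ne').symm
    _ ≤ mtSpecRad A ^ k := pow_le_pow_left₀ (Real.rpow_nonneg hP _) hmean k

theorem walkWeight_inv_mtSpecRad_smul_cycle_le_one (hA : ∀ i j, 0 ≤ A i j)
    (hlam : 0 < mtSpecRad A) (a : Fin n) (q : List (Fin n)) (hq : q.length < n) :
    ((mtSpecRad A)⁻¹ • A).walkWeight (a :: q ++ [a]) ≤ 1 := by
  have hcyc : A.walkWeight (a :: q ++ [a]) = A.cycleProd (a :: q).get := by
    rw [cycleProd_eq_walkWeight, List.ofFn_get]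
    rfl
  rw [List.cons_append, walkWeight_smul, ← List.cons_append, hcyc, List.length_append,
    List.length_singleton, inv_pow, inv_mul_le_one₀ (by positivity)]
  exact cycleProd_le_mtSpecRad_pow hA (Nat.succ_pos _) hq _

theorem exists_pos_mul_le_mtSpecRad_mul (hA : ∀ i j, 0 ≤ A i j) (hlam : 0 < mtSpecRad A) :
    ∃ x : Fin n → ℝ, (∀ i, 0 < x i) ∧ ∀ i j, A i j * x j ≤ mtSpecRad A * x i := by
  set B := (mtSpecRad A)⁻¹ • A
  have hB : ∀ i j, 0 ≤ B i j := fun i j => smul_nonneg (inv_nonneg.mpr hlam.le) (hA i j)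
  have hcyc : ∀ a q, q.length < Fintype.card (Fin n) → B.walkWeight (a :: q ++ [a]) ≤ 1 :=
    fun a q hq => walkWeight_inv_mtSpecRad_smul_cycle_le_one hA hlam a q
      (by rwa [Fintype.card_fin] at hq)
  refine ⟨B.maxShortWalkWeight, fun i => one_pos.trans_le (one_le_maxShortWalkWeight B i),
    fun i j => ?_⟩
  have := mul_maxShortWalkWeight_le hB hcyc i j
  rwa [show B i j = (mtSpecRad A)⁻¹ * A i j from rfl, mul_assoc, inv_mul_le_iff₀ hlam] at this

end MtSpecRad

theorem mt_unconstrained_min_general {n : ℕ} (A : Matrix (Fin n) (Fin n) ℝ)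
    (hA : ∀ i j, 0 ≤ A i j) (hlam : 0 < mtSpecRad A) :
    IsLeast { y : ℝ | ∃ x : Fin n → ℝ, (∀ i, 0 < x i) ∧
        y = ⨆ p : Fin n × Fin n, A p.1 p.2 * x p.2 / x p.1 }
      (mtSpecRad A) := by
  obtain ⟨x, hx, hAx⟩ := exists_pos_mul_le_mtSpecRad_mul hA hlam
  refine ⟨⟨x, hx, le_antisymm (mtSpecRad_le_iSup hA hx) (Real.iSup_le (fun p => ?_) hlam.le)⟩,
    ?_⟩
  · exact (div_le_iff₀ (hx p.1)).mpr (hAx p.1 p.2)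
  · rintro _ ⟨y, hy, rfl⟩
    exact mtSpecRad_le_iSup hA hy

/-- The infimum over positive vectors `x` of `max_{i,j} A_{ij} x_j / x_i`
equals the max-times spectral radius `λ(A)`, and it is attained. -/
theorem mt_unconstrained_min {n : ℕ} (hn : 1 ≤ n) (A : Matrix (Fin n) (Fin n) ℝ)
    (hA : ∀ i j, 0 ≤ A i j) (hlam : 0 < mtSpecRad A) :
    IsLeast { y : ℝ | ∃ x : Fin n → ℝ, (∀ i, 0 < x i) ∧
        y = ⨆ p : Fin n × Fin n, A p.1 p.2 * x p.2 / x p.1 }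
      (mtSpecRad A) :=
  mt_unconstrained_min_general A hA hlam

end
end

section
/- Let n ≥ 1, let A be an n×n real matrix, and let λ = λ(A) be its maximum cycle mean. A vector x ∈ ℝ^n satisfies max_{i,j} (A_{ij} + x_j − x_i) = λ (i.e., x attains the minimum of this objective over ℝ^n) if and only if there exists u ∈ ℝ^n such that x = (A − λ)^* ⊗ u in max-plus arithmetic, where A − λ denotes the matrix with entries A_{ij} − λ. -/
open scoped BigOperators

noncomputable section

/-!
Put `B = A − λ`. Telescoping `A_ij + x_j − x_i` along a cycle shows that every cycle mean is at
most `max_{ij} (A_ij + x_j − x_i)`, so `λ` is a lower bound of the objective and `x` attains it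
iff `B_ij + x_j ≤ x_i` for all `i, j`. Such an `x` satisfies `B^{⊗k} ⊗ x ≤ x` for every `k`,
hence `B^* ⊗ x = x`, as `B^*` has a nonnegative diagonal. Conversely, `B` has no cycle of
positive weight, so cutting cycles out of a walk shortens it to length `< n` without lowering its
weight; thus `B^*` dominates the weight of every walk, whence `B ⊗ B^* ≤ B^*` and every
`B^* ⊗ u` satisfies `B_ij + x_j ≤ x_i`.
-/

section MaxPlus

variable {n : ℕ}

theorem add_le_mpMul (A B : Matrix (Fin n) (Fin n) ℝ) (i k j : Fin n) :
    A i k + B k j ≤ mpMul A B i j :=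
  le_ciSup (f := fun k => A i k + B k j) (Set.finite_range _).bddAbove k

theorem mpMul_le {A B : Matrix (Fin n) (Fin n) ℝ} {i j : Fin n} {c : ℝ}
    (h : ∀ k, A i k + B k j ≤ c) : mpMul A B i j ≤ c :=
  have : Nonempty (Fin n) := ⟨i⟩
  ciSup_le h

theorem add_le_mpVecMul (S : Matrix (Fin n) (Fin n) ℝ) (u : Fin n → ℝ) (i j : Fin n) :
    S i j + u j ≤ mpVecMul S u i :=
  le_ciSup (f := fun j => S i j + u j) (Set.finite_range _).bddAbove j

theorem mpVecMul_le {S : Matrix (Fin n) (Fin n) ℝ} {u : Fin n → ℝ} {i : Fin n} {c : ℝ}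
    (h : ∀ j, S i j + u j ≤ c) : mpVecMul S u i ≤ c :=
  have : Nonempty (Fin n) := ⟨i⟩
  ciSup_le h

theorem add_mpPow_le_mpPow_succ (B : Matrix (Fin n) (Fin n) ℝ) (k : ℕ) (i j l : Fin n) :
    B i j + mpPow B k j l ≤ mpPow B (k + 1) i l := by
  induction k generalizing l with
  | zero => exact add_le_mpMul B B i j l
  | succ k ih =>
    rw [← le_sub_iff_add_le']
    refine mpMul_le fun m => le_sub_iff_add_le'.2 ?_
    calc B i j + (mpPow B k j m + B m l) = (B i j + mpPow B k j m) + B m l := by ring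
      _ ≤ mpPow B (k + 1) i m + B m l := by gcongr; exact ih m
      _ ≤ mpPow B (k + 2) i l := add_le_mpMul _ _ _ _ _

/-- `⨆` over the empty type `Fin (n - 1)` (when `n = 1`) is `0` in `ℝ`; this is harmless, as it
only occurs on the diagonal, inside `max 0`. -/
theorem mpStar_le_iff {B : Matrix (Fin n) (Fin n) ℝ} {i j : Fin n} {c : ℝ} :
    mpStar B i j ≤ c ↔ (i = j → 0 ≤ c) ∧ ∀ k : Fin (n - 1), mpPow B k i j ≤ c := by
  have hle : ∀ k : Fin (n - 1), mpPow B k i j ≤ ⨆ k : Fin (n - 1), mpPow B k i j :=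
    le_ciSup (Set.finite_range _).bddAbove
  simp only [mpStar, Matrix.of_apply]
  split_ifs with hij
  · subst hij
    simp only [max_le_iff, forall_const]
    exact ⟨fun h => ⟨h.1, fun k => (hle k).trans h.2⟩, fun h => ⟨h.1, Real.iSup_le h.2 h.1⟩⟩
  · have : Nonempty (Fin (n - 1)) := ⟨⟨0, by have := Fin.val_ne_of_ne hij; omega⟩⟩
    simp only [hij, IsEmpty.forall_iff, true_and]
    exact ciSup_le_iff (Set.finite_range _).bddAbove

theorem mpStar_self_nonneg (B : Matrix (Fin n) (Fin n) ℝ) (i : Fin n) : 0 ≤ mpStar B i i :=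
  (mpStar_le_iff.1 le_rfl).1 rfl

theorem mpPow_le_mpStar_of_lt (B : Matrix (Fin n) (Fin n) ℝ) {k : ℕ} (hk : k < n - 1)
    (i j : Fin n) : mpPow B k i j ≤ mpStar B i j :=
  (mpStar_le_iff.1 le_rfl).2 ⟨k, hk⟩

theorem mpVecMul_mpStar_eq_self {B : Matrix (Fin n) (Fin n) ℝ} {x : Fin n → ℝ}
    (h : ∀ i j, B i j + x j ≤ x i) : mpVecMul (mpStar B) x = x := by
  have hpow : ∀ k i j, mpPow B k i j + x j ≤ x i := by
    intro k
    induction k with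
    | zero => exact h
    | succ k ih =>
      intro i j
      rw [← le_sub_iff_add_le]
      exact mpMul_le fun m => by linarith [ih i m, h m j]
  have hstar : ∀ i j, mpStar B i j + x j ≤ x i := by
    intro i j
    rw [← le_sub_iff_add_le, mpStar_le_iff]
    exact ⟨by rintro rfl; simp, fun k => le_sub_iff_add_le.2 (hpow k i j)⟩
  funext i
  refine le_antisymm (mpVecMul_le (hstar i)) ?_
  linarith [add_le_mpVecMul (mpStar B) x i i, mpStar_self_nonneg B i]

/-- A walk of length `L` is encoded as `G : ℕ → Fin n`, of which only `G 0, …, G L` matter. -/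
def walkWeight (B : Matrix (Fin n) (Fin n) ℝ) (G : ℕ → Fin n) (L : ℕ) : ℝ :=
  ∑ t ∈ Finset.range L, B (G t) (G (t + 1))

section Walks

variable (B : Matrix (Fin n) (Fin n) ℝ)

theorem walkWeight_succ (G : ℕ → Fin n) (L : ℕ) :
    walkWeight B G (L + 1) = walkWeight B G L + B (G L) (G (L + 1)) :=
  Finset.sum_range_succ _ _

theorem walkWeight_add (G : ℕ → Fin n) (a m : ℕ) :
    walkWeight B G (a + m) = walkWeight B G a + walkWeight B (fun t => G (a + t)) m := by
  simp only [walkWeight, Finset.sum_range_add, add_assoc]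

theorem walkWeight_congr {G G' : ℕ → Fin n} {L : ℕ} (h : ∀ t ≤ L, G t = G' t) :
    walkWeight B G L = walkWeight B G' L :=
  Finset.sum_congr rfl fun t ht => by
    have := Finset.mem_range.1 ht
    rw [h t (by omega), h (t + 1) (by omega)]

theorem walkWeight_le_mpPow (G : ℕ → Fin n) (m : ℕ) :
    walkWeight B G (m + 1) ≤ mpPow B m (G 0) (G (m + 1)) := by
  induction m with
  | zero => simp [walkWeight, mpPow]
  | succ m ih =>
    rw [walkWeight_succ]
    exact (add_le_add_left ih _).trans (add_le_mpMul _ _ _ _ _)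

theorem exists_walk_mpPow_le (m : ℕ) (i j : Fin n) :
    ∃ G : ℕ → Fin n, G 0 = i ∧ G (m + 1) = j ∧ mpPow B m i j ≤ walkWeight B G (m + 1) := by
  induction m generalizing j with
  | zero => exact ⟨Function.update (fun _ => i) 1 j, rfl, by simp, by simp [walkWeight, mpPow]⟩
  | succ m ih =>
    have : Nonempty (Fin n) := ⟨i⟩
    obtain ⟨k, hk⟩ := Finite.exists_max fun k => mpPow B m i k + B k j
    obtain ⟨G, hG0, hGk, hG⟩ := ih k
    refine ⟨Function.update G (m + 2) j, by simp [hG0], by simp, ?_⟩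
    rw [walkWeight_succ,
      walkWeight_congr B (G' := G) fun t ht => Function.update_of_ne (by omega) _ _,
      Function.update_self, Function.update_of_ne (by omega), hGk]
    exact (mpMul_le hk).trans (by linarith)

theorem exists_lt_le_apply_eq (G : ℕ → Fin n) : ∃ a b, a < b ∧ b ≤ n ∧ G a = G b := by
  obtain ⟨s, t, hst, h⟩ :=
    Fintype.exists_ne_map_eq_of_card_lt (fun t : Fin (n + 1) => G t) (by simp)
  rcases lt_or_gt_of_ne (Fin.val_ne_of_ne hst) with hlt | hlt
  · exact ⟨s, t, hlt, Nat.lt_succ_iff.1 t.isLt, h⟩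
  · exact ⟨t, s, hlt, Nat.lt_succ_iff.1 s.isLt, h.symm⟩

/-- Cutting the closed segment `G a, …, G b` out of a walk of length `L`. -/
theorem exists_walk_cut (G : ℕ → Fin n) {a b L : ℕ} (hab : a ≤ b) (hbL : b ≤ L)
    (hG : G a = G b) :
    ∃ G' : ℕ → Fin n, G' 0 = G 0 ∧ G' (L - (b - a)) = G L ∧
      walkWeight B G L =
        walkWeight B G' (L - (b - a)) + walkWeight B (fun t => G (a + t)) (b - a) := by
  set G' : ℕ → Fin n := fun t => if t < a then G t else G (t - a + b)
  have htail : (fun t => G' (a + t)) = fun t => G (b + t) := by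
    funext t
    simp [G', add_comm]
  have hhead : ∀ t ≤ a, G' t = G t := by
    intro t ht
    rcases ht.lt_or_eq with ht | rfl
    · simp [G', ht]
    · simpa [hG] using congrFun htail 0
  have hL : L - (b - a) = a + (L - b) := by omega
  refine ⟨G', hhead 0 (Nat.zero_le a), ?_, ?_⟩
  · rw [hL, congrFun htail, Nat.add_sub_cancel' hbL]
  · have hsplit := walkWeight_add B (fun t => G (a + t)) (b - a) (L - b)
    simp only [← add_assoc, Nat.add_sub_cancel' hab] at hsplit
    have hlen : L = a + (b - a + (L - b)) := by omega
    rw [hL, walkWeight_add, htail, walkWeight_congr B hhead]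
    conv_lhs => rw [hlen, walkWeight_add, hsplit]
    ring

/-- Only closed walks of length at most `n` are tested; this suffices, as every closed walk splits
into elementary cycles. -/
def NoPositiveCycles : Prop :=
  ∀ (k : ℕ) (G : ℕ → Fin n), 0 < k → k ≤ n → G k = G 0 → walkWeight B G k ≤ 0

variable {B}

theorem walkWeight_le_mpStar (hB : NoPositiveCycles B) (L : ℕ) (G : ℕ → Fin n) :
    walkWeight B G L ≤ mpStar B (G 0) (G L) := by
  induction L using Nat.strong_induction_on generalizing G with
  | _ L ih =>
  rcases lt_or_ge L n with hLn | hnL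
  · rcases L with _ | m
    · simpa [walkWeight] using mpStar_self_nonneg B (G 0)
    · exact (walkWeight_le_mpPow B G m).trans (mpPow_le_mpStar_of_lt B (by omega) _ _)
  · obtain ⟨a, b, hab, hbn, hG⟩ := exists_lt_le_apply_eq G
    obtain ⟨G', hG'0, hG'L, hw⟩ := exists_walk_cut B G hab.le (hbn.trans hnL) hG
    have hcycle : walkWeight B (fun t => G (a + t)) (b - a) ≤ 0 :=
      hB (b - a) (fun t => G (a + t)) (by omega) (by omega)
        (by simp [Nat.add_sub_cancel' hab.le, hG])
    calc walkWeight B G L ≤ walkWeight B G' (L - (b - a)) := by linarith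
      _ ≤ mpStar B (G 0) (G L) := by
        simpa only [hG'0, hG'L] using ih (L - (b - a)) (by omega) G'

theorem mpPow_le_mpStar (hB : NoPositiveCycles B) (k : ℕ) (i j : Fin n) :
    mpPow B k i j ≤ mpStar B i j := by
  obtain ⟨G, rfl, rfl, hG⟩ := exists_walk_mpPow_le B k i j
  exact hG.trans (walkWeight_le_mpStar hB _ G)

theorem add_mpStar_le (hB : NoPositiveCycles B) (i j l : Fin n) :
    B i j + mpStar B j l ≤ mpStar B i l := by
  rw [← le_sub_iff_add_le', mpStar_le_iff]
  refine ⟨?_, fun k => le_sub_iff_add_le'.2 ?_⟩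
  · rintro rfl
    exact sub_nonneg.2 (mpPow_le_mpStar hB 0 i j)
  · exact (add_mpPow_le_mpPow_succ B k i j l).trans (mpPow_le_mpStar hB _ i l)

theorem add_mpVecMul_mpStar_le (hB : NoPositiveCycles B) (u : Fin n → ℝ) (i j : Fin n) :
    B i j + mpVecMul (mpStar B) u j ≤ mpVecMul (mpStar B) u i := by
  rw [← le_sub_iff_add_le']
  refine mpVecMul_le fun l => le_sub_iff_add_le'.2 ?_
  calc B i j + (mpStar B j l + u l) ≤ mpStar B i l + u l := by
        linarith [add_mpStar_le hB i j l]
    _ ≤ mpVecMul (mpStar B) u i := add_le_mpVecMul _ _ _ _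

end Walks

end MaxPlus

section CycleMean

variable {n : ℕ} (A : Matrix (Fin n) (Fin n) ℝ)

def closedWalkMeans : Set ℝ :=
  {r | ∃ (k : ℕ) (G : ℕ → Fin n), 0 < k ∧ k ≤ n ∧ G k = G 0 ∧ r = walkWeight A G k / k}

theorem mpCycleMean_eq_sSup_closedWalkMeans : mpCycleMean A = sSup (closedWalkMeans A) := by
  refine congrArg sSup (Set.ext fun r => ⟨?_, ?_⟩)
  · rintro ⟨k, hk, hkn, f, rfl⟩
    refine ⟨k, fun t => f ⟨t % k, Nat.mod_lt _ hk⟩, hk, hkn, by simp, ?_⟩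
    rw [walkWeight, Finset.sum_range]
    simp [Nat.mod_eq_of_lt]
  · rintro ⟨k, G, hk, hkn, hG, rfl⟩
    refine ⟨k, hk, hkn, fun t => G t, ?_⟩
    rw [walkWeight, Finset.sum_range]
    congr 1
    refine Finset.sum_congr rfl fun t _ => ?_
    rcases (Nat.add_one_le_iff.2 t.isLt).lt_or_eq with h | h
    · simp [Nat.mod_eq_of_lt h]
    · simp [h, ← hG]

/-- The potential `y` telescopes away along a closed walk. -/
theorem walkWeight_div_le_iSup {k : ℕ} (hk : 0 < k) {G : ℕ → Fin n} (hG : G k = G 0)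
    (y : Fin n → ℝ) : walkWeight A G k / k ≤ ⨆ p : Fin n × Fin n, A p.1 p.2 + y p.2 - y p.1 := by
  have htel : ∑ t ∈ Finset.range k, (y (G (t + 1)) - y (G t)) = 0 := by
    rw [Finset.sum_range_sub (fun t => y (G t)), hG, sub_self]
  rw [div_le_iff₀ (by exact_mod_cast hk)]
  calc walkWeight A G k
      = ∑ t ∈ Finset.range k, (A (G t) (G (t + 1)) + y (G (t + 1)) - y (G t)) := by
        simp only [walkWeight, add_sub_assoc, Finset.sum_add_distrib, htel, add_zero]
    _ ≤ ∑ t ∈ Finset.range k, ⨆ p : Fin n × Fin n, A p.1 p.2 + y p.2 - y p.1 :=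
        Finset.sum_le_sum fun t _ =>
          le_ciSup (f := fun p : Fin n × Fin n => A p.1 p.2 + y p.2 - y p.1)
            (Set.finite_range _).bddAbove (G t, G (t + 1))
    _ = _ := by simp [mul_comm]

theorem bddAbove_closedWalkMeans : BddAbove (closedWalkMeans A) :=
  ⟨⨆ p : Fin n × Fin n, A p.1 p.2 + (0 : Fin n → ℝ) p.2 - (0 : Fin n → ℝ) p.1,
    fun _ ⟨_, _, hk, _, hG, h⟩ => h ▸ walkWeight_div_le_iSup A hk hG 0⟩

theorem mpCycleMean_le_iSup [Nonempty (Fin n)] (y : Fin n → ℝ) :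
    mpCycleMean A ≤ ⨆ p : Fin n × Fin n, A p.1 p.2 + y p.2 - y p.1 := by
  rw [mpCycleMean_eq_sSup_closedWalkMeans]
  refine csSup_le ⟨_, 1, fun _ => Classical.arbitrary _, one_pos,
    Fin.pos_iff_nonempty.2 ‹_›, rfl, rfl⟩ ?_
  rintro _ ⟨k, G, hk, -, hG, rfl⟩
  exact walkWeight_div_le_iSup A hk hG y

theorem noPositiveCycles_sub_mpCycleMean :
    NoPositiveCycles (Matrix.of fun i j => A i j - mpCycleMean A) := by
  intro k G hk hkn hG
  have hmean : walkWeight A G k / k ≤ mpCycleMean A := by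
    rw [mpCycleMean_eq_sSup_closedWalkMeans]
    exact le_csSup (bddAbove_closedWalkMeans A) ⟨k, G, hk, hkn, hG, rfl⟩
  rw [div_le_iff₀ (by exact_mod_cast hk)] at hmean
  simp only [walkWeight, Matrix.of_apply, Finset.sum_sub_distrib, Finset.sum_const,
    Finset.card_range, nsmul_eq_mul] at hmean ⊢
  linarith

theorem iSup_eq_mpCycleMean_iff [Nonempty (Fin n)] (x : Fin n → ℝ) :
    (⨆ p : Fin n × Fin n, A p.1 p.2 + x p.2 - x p.1) = mpCycleMean A ↔
      ∀ i j, A i j - mpCycleMean A + x j ≤ x i := by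
  rw [le_antisymm_iff, and_iff_left (mpCycleMean_le_iSup A x),
    ciSup_le_iff (Set.finite_range _).bddAbove, Prod.forall]
  exact forall₂_congr fun i j => by constructor <;> intro h <;> linarith

end CycleMean

/-- `x` attains the minimum value `λ(A)` of `max_{i,j} (A_{ij} + x_j − x_i)`
iff `x = (A − λ)^* ⊗ u` in max-plus arithmetic for some `u ∈ ℝⁿ`. -/
theorem mp_unconstrained_minimizers {n : ℕ} (hn : 1 ≤ n) (A : Matrix (Fin n) (Fin n) ℝ)
    (lam : ℝ) (hlam : lam = mpCycleMean A) (x : Fin n → ℝ) :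
    (⨆ p : Fin n × Fin n, A p.1 p.2 + x p.2 - x p.1) = lam ↔
      ∃ u : Fin n → ℝ, x = mpVecMul (mpStar (Matrix.of fun i j => A i j - lam)) u := by
  subst hlam
  have : Nonempty (Fin n) := ⟨⟨0, hn⟩⟩
  rw [iSup_eq_mpCycleMean_iff]
  constructor
  · exact fun h => ⟨x, (mpVecMul_mpStar_eq_self h).symm⟩
  · rintro ⟨u, rfl⟩
    exact add_mpVecMul_mpStar_le (noPositiveCycles_sub_mpCycleMean A) u
end
end
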